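/- arXiv:gr-qc/0202069 — 12 statements merged into one kernel-verified Lean document; each statement's English description precedes it below -/
import Mathlib

section
/- Let λ be a real number. There exist real numbers p₁ ≤ p₂ ≤ p₃ and A satisfying the Kasner conditions p₁ + p₂ + p₃ = 1 and p₁² + p₂² + p₃² + A² = 1 together with the strict inequalities p₁ > 0, 2p₁ − λA > 0 and 2p₁ + λA > 0, if and only if |λ| < √(2/3). (Thus the critical dilaton coupling of the Einstein–Maxwell–dilaton system in 4 spacetime dimensions is λ_c = √(2/3).) -/
/-- The critical dilaton coupling of the Einstein–Maxwell–dilaton system in 4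
spacetime dimensions is `λ_c = √(2/3)`: generalized Kasner exponents
`p₁ ≤ p₂ ≤ p₃`, `A` satisfying the Kasner conditions and the strict electric,
gravitational and magnetic wall inequalities exist iff `|λ| < √(2/3)`. -/
theorem subcritical_maxwell_dilaton_4d (lam : ℝ) :
    (∃ p₁ p₂ p₃ A : ℝ,
      p₁ ≤ p₂ ∧ p₂ ≤ p₃ ∧
      p₁ + p₂ + p₃ = 1 ∧
      p₁ ^ 2 + p₂ ^ 2 + p₃ ^ 2 + A ^ 2 = 1 ∧
      p₁ > 0 ∧ 2 * p₁ - lam * A > 0 ∧ 2 * p₁ + lam * A > 0) ↔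
    |lam| < Real.sqrt (2 / 3) := by
  have hs2 : Real.sqrt (2 / 3) ^ 2 = 2 / 3 := Real.sq_sqrt (by norm_num)
  have hs0 : 0 < Real.sqrt (2 / 3) := Real.sqrt_pos.mpr (by norm_num)
  constructor
  · rintro ⟨p₁, p₂, p₃, A, h12, h23, hsum, hsq, hp, he, hm⟩
    by_contra hcon
    push_neg at hcon
    have hl2 : (2 : ℝ) / 3 ≤ lam ^ 2 := by
      have := pow_le_pow_left₀ hs0.le hcon 2
      rwa [hs2, sq_abs] at this
    have hprod : 0 < (2 * p₁ - lam * A) * (2 * p₁ + lam * A) := mul_pos he hm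
    nlinarith [sq_nonneg A, sq_nonneg lam, sq_nonneg (p₂ - p₃),
      mul_nonneg (sub_nonneg.2 h12) (sub_nonneg.2 (h12.trans h23)),
      mul_nonneg (sub_nonneg.2 h23) (sub_nonneg.2 h12),
      mul_nonneg (mul_nonneg (sub_nonneg.2 (hl2)) (sq_nonneg A)) hp.le,
      mul_pos hp hp]
  · intro h
    refine ⟨1/3, 1/3, 1/3, Real.sqrt (2/3), le_refl _, le_refl _, by norm_num, by
      nlinarith, by norm_num, ?_, ?_⟩
    · have := (abs_lt.mp h).2
      nlinarith
    · have := (abs_lt.mp h).1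
      nlinarith
end

section
/- Let λ be a real number and d = 4. There exist real numbers p₁ ≤ p₂ ≤ p₃ ≤ p₄ and A satisfying p₁ + p₂ + p₃ + p₄ = 1 and p₁² + p₂² + p₃² + p₄² + A² = 1 together with 2p₁ − λA > 0 and 2(p₁ + p₂) + λA > 0, if and only if |λ| < 2/√3. (The critical dilaton coupling for a 1-form in 5 spacetime dimensions is λ_c = 2/√3.) -/
set_option maxHeartbeats 800000

/-- The critical dilaton coupling for a 1-form in 5 spacetime dimensions
(`d = 4` spatial dimensions) is `λ_c = 2/√3`. -/
theorem subcritical_one_form_d4 (lam : ℝ) :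
    (∃ p₁ p₂ p₃ p₄ A : ℝ,
      p₁ ≤ p₂ ∧ p₂ ≤ p₃ ∧ p₃ ≤ p₄ ∧
      p₁ + p₂ + p₃ + p₄ = 1 ∧
      p₁ ^ 2 + p₂ ^ 2 + p₃ ^ 2 + p₄ ^ 2 + A ^ 2 = 1 ∧
      2 * p₁ - lam * A > 0 ∧ 2 * (p₁ + p₂) + lam * A > 0) ↔
    |lam| < 2 / Real.sqrt 3 := by
  have h3 : (0:ℝ) < Real.sqrt 3 := Real.sqrt_pos.mpr (by norm_num)
  have hsq : Real.sqrt 3 ^ 2 = 3 := Real.sq_sqrt (by norm_num)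
  have key : |lam| < 2 / Real.sqrt 3 ↔ 3 * lam ^ 2 < 4 := by
    rw [lt_div_iff₀ h3]
    constructor
    · intro h
      nlinarith [abs_nonneg lam, sq_abs lam, mul_nonneg (abs_nonneg lam) h3.le]
    · intro h
      nlinarith [abs_nonneg lam, sq_abs lam, mul_nonneg (abs_nonneg lam) h3.le]
  rw [key]
  constructor
  · rintro ⟨p₁, p₂, p₃, p₄, A, h12, h23, h34, hsum, hquad, hE, hM⟩
    rcases le_or_gt 0 (lam * A) with hx | hx
    · -- electric side binds: p₁ > 0
      have hp1 : 0 < p₁ := by linarith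
      have hp2 : 0 < p₂ := lt_of_lt_of_le hp1 h12
      have hp3 : 0 < p₃ := lt_of_lt_of_le hp2 h23
      have hA2 : 3 * p₁ ^ 2 ≤ A ^ 2 := by
        nlinarith [mul_nonneg hp1.le (sub_nonneg.mpr (h12.trans (h23.trans h34))),
          mul_nonneg hp2.le (sub_nonneg.mpr (h23.trans h34)),
          mul_nonneg hp3.le (sub_nonneg.mpr h34),
          mul_nonneg (show (0:ℝ) ≤ 1 - 3*p₁ - p₄ by linarith)
            (show (0:ℝ) ≤ 1 + 3*p₁ by linarith), sq_nonneg p₁]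
      have hA0 : 0 < A ^ 2 := by nlinarith [mul_pos hp1 hp1]
      have h1 : (lam * A) * (lam * A) < (2 * p₁) * (2 * p₁) :=
        mul_self_lt_mul_self hx (by linarith)
      have hx2 : 3 * lam ^ 2 * A ^ 2 < 4 * A ^ 2 := by nlinarith [h1, hA2]
      exact lt_of_mul_lt_mul_right hx2 (sq_nonneg A)
    · -- magnetic side binds: p₁ + p₂ > 0
      have hs : 0 < p₁ + p₂ := by linarith
      have hA2 : 3 * (p₁ + p₂) ^ 2 ≤ A ^ 2 := by
        nlinarith [mul_nonneg (sub_nonneg.mpr h12) (sub_nonneg.mpr h34),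
          mul_nonneg (show (0:ℝ) ≤ 2*(p₃ - p₂) by linarith)
            (show (0:ℝ) ≤ 2*(p₃ - p₂) + 2*((p₂-p₁)+(p₄-p₃)) by linarith),
          mul_nonneg hs.le (show (0:ℝ) ≤ 2*(p₃-p₂) + (p₂-p₁) + (p₄-p₃) by linarith)]
      have hA0 : 0 < A ^ 2 := by nlinarith [mul_pos hs hs]
      have h1 : (-(lam * A)) * (-(lam * A)) < (2 * (p₁ + p₂)) * (2 * (p₁ + p₂)) :=
        mul_self_lt_mul_self (by linarith) (by linarith)
      have hx2 : 3 * lam ^ 2 * A ^ 2 < 4 * A ^ 2 := by nlinarith [h1, hA2]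
      exact lt_of_mul_lt_mul_right hx2 (sq_nonneg A)
  · intro h
    rcases le_or_gt 0 lam with hl | hl
    · refine ⟨1/4, 1/4, 1/4, 1/4, -(Real.sqrt 3 / 2), le_refl _, le_refl _, le_refl _,
        by norm_num, ?_, ?_, ?_⟩
      · have hA : (-(Real.sqrt 3 / 2)) ^ 2 = 3/4 := by
          rw [neg_sq, div_pow, hsq]; norm_num
        rw [hA]; norm_num
      · nlinarith [mul_nonneg hl h3.le]
      · nlinarith [mul_nonneg hl h3.le]
    · refine ⟨1/4, 1/4, 1/4, 1/4, Real.sqrt 3 / 2, le_refl _, le_refl _, le_refl _,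
        by norm_num, ?_, ?_, ?_⟩
      · have hA : (Real.sqrt 3 / 2) ^ 2 = 3/4 := by
          rw [div_pow, hsq]; norm_num
        rw [hA]; norm_num
      · nlinarith [mul_nonneg (neg_nonneg.mpr hl.le) h3.le]
      · nlinarith [mul_nonneg (neg_nonneg.mpr hl.le) h3.le]
end

section
/- Let λ be a real number and d = 5. There exist real numbers p₁ ≤ p₂ ≤ ⋯ ≤ p₅ and A satisfying p₁ + ⋯ + p₅ = 1 and p₁² + ⋯ + p₅² + A² = 1 together with 2p₁ − λA > 0 and 2(p₁ + p₂ + p₃) + λA > 0, if and only if |λ| < 3/√5. (The critical dilaton coupling for a 1-form in 6 spacetime dimensions is λ_c = 3/√5.) -/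
private lemma key_ineq (a b c d e : ℝ) (hab : a ≤ b) (hbc : b ≤ c) (hcd : c ≤ d)
    (hde : d ≤ e) (hsum : a + b + c + d + e = 1) (hC : 0 < 2*a + b + c) :
    9*(a^2+b^2+c^2+d^2+e^2) + 20*(a+b+c)^2 ≤ 9 := by
  have hc : 0 < c := by linarith
  have hde' : c * c ≤ d * e :=
    mul_le_mul hcd (le_trans hcd hde) hc.le (by linarith)
  have hD : (0:ℝ) ≤ d + e - 2*c := by linarith
  have h9 : (9:ℝ) = 9*(a+b+c+d+e)^2 := by rw [hsum]; norm_num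
  have cert : 9*(a+b+c+d+e)^2 - (9*(a^2+b^2+c^2+d^2+e^2) + 20*(a+b+c)^2) =
      18*(d*e - c*c) + (27/2)*((2*a+b+c)*(d+e-2*c)) + 9*((b-a)*(d+e-2*c))
      + (9/2)*((c-b)*(d+e-2*c)) + 4*(b-a)^2 + 22*((b-a)*(c-b))
      + 12*((b-a)*(2*a+b+c)) + 10*(c-b)^2 + 24*((c-b)*(2*a+b+c)) := by ring
  have t1 : (0:ℝ) ≤ (2*a+b+c)*(d+e-2*c) := mul_nonneg hC.le hD
  have t2 : (0:ℝ) ≤ (b-a)*(d+e-2*c) := mul_nonneg (by linarith) hD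
  have t3 : (0:ℝ) ≤ (c-b)*(d+e-2*c) := mul_nonneg (by linarith) hD
  have t4 : (0:ℝ) ≤ (b-a)*(c-b) := mul_nonneg (by linarith) (by linarith)
  have t5 : (0:ℝ) ≤ (b-a)*(2*a+b+c) := mul_nonneg (by linarith) hC.le
  have t6 : (0:ℝ) ≤ (c-b)*(2*a+b+c) := mul_nonneg (by linarith) hC.le
  linarith [sq_nonneg (b-a), sq_nonneg (c-b), t1, t2, t3, t4, t5, t6, hde', cert, h9]

/-- The critical dilaton coupling for a 1-form in 6 spacetime dimensions
(`d = 5` spatial dimensions) is `λ_c = 3/√5`. -/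
theorem subcritical_one_form_d5 (lam : ℝ) :
    (∃ p₁ p₂ p₃ p₄ p₅ A : ℝ,
      p₁ ≤ p₂ ∧ p₂ ≤ p₃ ∧ p₃ ≤ p₄ ∧ p₄ ≤ p₅ ∧
      p₁ + p₂ + p₃ + p₄ + p₅ = 1 ∧
      p₁ ^ 2 + p₂ ^ 2 + p₃ ^ 2 + p₄ ^ 2 + p₅ ^ 2 + A ^ 2 = 1 ∧
      2 * p₁ - lam * A > 0 ∧ 2 * (p₁ + p₂ + p₃) + lam * A > 0) ↔
    |lam| < 3 / Real.sqrt 5 := by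
  have h5 : (0:ℝ) < Real.sqrt 5 := Real.sqrt_pos.2 (by norm_num)
  have hsq5 : Real.sqrt 5 ^ 2 = 5 := Real.sq_sqrt (by norm_num)
  constructor
  · rintro ⟨p₁, p₂, p₃, p₄, p₅, A, h12, h23, h34, h45, hsum, hq, hE, hM⟩
    have hlam2 : lam^2 < 9/5 := by
      by_contra hcon
      push_neg at hcon
      have hs : 0 < p₁ + p₂ + p₃ := by linarith
      have hC : 0 < 2*p₁ + p₂ + p₃ := by linarith
      have ht2 : (lam*A)^2 < 4*(p₁+p₂+p₃)^2 := by
        nlinarith [mul_pos (show 0 < 2*(p₁+p₂+p₃) - lam*A by linarith)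
          (show 0 < 2*(p₁+p₂+p₃) + lam*A by linarith)]
      have hA2 : (9/5)*A^2 ≤ (lam*A)^2 := by
        nlinarith [mul_le_mul_of_nonneg_right hcon (sq_nonneg A)]
      have hkey := key_ineq p₁ p₂ p₃ p₄ p₅ h12 h23 h34 h45 hsum hC
      nlinarith [hkey, ht2, hA2]
    have h9 : (3 / Real.sqrt 5)^2 = 9/5 := by
      rw [div_pow, hsq5]; norm_num
    have hpos : 0 < 3 / Real.sqrt 5 := by positivity
    calc |lam| = Real.sqrt (lam^2) := (Real.sqrt_sq_eq_abs lam).symm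
      _ < Real.sqrt ((3/Real.sqrt 5)^2) :=
          Real.sqrt_lt_sqrt (sq_nonneg lam) (by rw [h9]; exact hlam2)
      _ = 3/Real.sqrt 5 := Real.sqrt_sq hpos.le
  · intro h
    refine ⟨1/5, 1/5, 1/5, 1/5, 1/5,
      if 0 ≤ lam then -(2/Real.sqrt 5) else 2/Real.sqrt 5,
      le_refl _, le_refl _, le_refl _, le_refl _, by norm_num, ?_, ?_, ?_⟩
    · have h45' : ((2:ℝ)/Real.sqrt 5)^2 = 4/5 := by rw [div_pow, hsq5]; norm_num
      have hA2 : (if 0 ≤ lam then -(2/Real.sqrt 5) else 2/Real.sqrt 5)^2 = 4/5 := by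
        split
        · rw [neg_sq]; exact h45'
        · exact h45'
      rw [hA2]; norm_num
    · have hA : lam * (if 0 ≤ lam then -(2/Real.sqrt 5) else 2/Real.sqrt 5)
          = -(|lam| * (2/Real.sqrt 5)) := by
        split
        · next hl => rw [abs_of_nonneg hl]; ring
        · next hl => rw [abs_of_neg (lt_of_not_ge hl)]; ring
      rw [hA]
      have : 0 ≤ |lam| * (2/Real.sqrt 5) := by positivity
      linarith
    · have hA : lam * (if 0 ≤ lam then -(2/Real.sqrt 5) else 2/Real.sqrt 5)
          = -(|lam| * (2/Real.sqrt 5)) := by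
        split
        · next hl => rw [abs_of_nonneg hl]; ring
        · next hl => rw [abs_of_neg (lt_of_not_ge hl)]; ring
      rw [hA]
      have h65 : (3/Real.sqrt 5)*(2/Real.sqrt 5) = 6/5 := by
        rw [div_mul_div_comm, Real.mul_self_sqrt (by norm_num : (0:ℝ) ≤ 5)]
        norm_num
      have h25 := mul_lt_mul_of_pos_right h (show (0:ℝ) < 2/Real.sqrt 5 by positivity)
      linarith
end

section
/- Let λ be a real number and d = 6. There exist real numbers p₁ ≤ p₂ ≤ ⋯ ≤ p₆ and A satisfying p₁ + ⋯ + p₆ = 1 and p₁² + ⋯ + p₆² + A² = 1 together with 2p₁ − λA > 0 and 2(p₁ + p₂ + p₃ + p₄) + λA > 0, if and only if |λ| < 4√2/√15. (The critical dilaton coupling for a 1-form in 7 spacetime dimensions is λ_c = 4√2/√15.) -/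
/-- Electric-wall auxiliary inequality: if the Kasner exponents are sorted,
sum to 1, and `p₁ > 0`, then `15 p₁² ≤ 8 A²`. -/
lemma elec_aux (p₁ p₂ p₃ p₄ p₅ p₆ A : ℝ)
    (h12 : p₁ ≤ p₂) (h23 : p₂ ≤ p₃) (h34 : p₃ ≤ p₄) (h45 : p₄ ≤ p₅) (h56 : p₅ ≤ p₆)
    (hsum : p₁ + p₂ + p₃ + p₄ + p₅ + p₆ = 1)
    (hsq : p₁ ^ 2 + p₂ ^ 2 + p₃ ^ 2 + p₄ ^ 2 + p₅ ^ 2 + p₆ ^ 2 + A ^ 2 = 1)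
    (hp : 0 < p₁) : 15 * p₁ ^ 2 ≤ 8 * A ^ 2 := by
  have h2 : p₁ ≤ p₃ := le_trans h12 h23
  have h3 : p₁ ≤ p₄ := le_trans h2 h34
  have h4 : p₁ ≤ p₅ := le_trans h3 h45
  have h5 : p₁ ≤ p₆ := le_trans h4 h56
  have h1 : (p₁ + p₂ + p₃ + p₄ + p₅ + p₆) ^ 2 = 1 := by rw [hsum]; norm_num
  nlinarith [mul_nonneg (sub_nonneg.2 h12) (sub_nonneg.2 h2),
    mul_nonneg (sub_nonneg.2 h12) (sub_nonneg.2 h3),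
    mul_nonneg (sub_nonneg.2 h12) (sub_nonneg.2 h4),
    mul_nonneg (sub_nonneg.2 h12) (sub_nonneg.2 h5),
    mul_nonneg (sub_nonneg.2 h2) (sub_nonneg.2 h3),
    mul_nonneg (sub_nonneg.2 h2) (sub_nonneg.2 h4),
    mul_nonneg (sub_nonneg.2 h2) (sub_nonneg.2 h5),
    mul_nonneg (sub_nonneg.2 h3) (sub_nonneg.2 h4),
    mul_nonneg (sub_nonneg.2 h3) (sub_nonneg.2 h5),
    mul_nonneg (sub_nonneg.2 h4) (sub_nonneg.2 h5),
    mul_nonneg hp.le (sub_nonneg.2 h12),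
    mul_nonneg hp.le (sub_nonneg.2 h2),
    mul_nonneg hp.le (sub_nonneg.2 h3),
    mul_nonneg hp.le (sub_nonneg.2 h4),
    mul_nonneg hp.le (sub_nonneg.2 h5),
    mul_pos hp hp]

/-- Magnetic-wall auxiliary inequality: if the Kasner exponents are sorted,
sum to 1, `σ = p₁+p₂+p₃+p₄ ≥ 0` and `p₁ + σ ≥ 0`, then `15 σ² ≤ 8 A²`. -/
lemma mag_aux (p₁ p₂ p₃ p₄ p₅ p₆ A : ℝ)
    (h12 : p₁ ≤ p₂) (h23 : p₂ ≤ p₃) (h34 : p₃ ≤ p₄) (h45 : p₄ ≤ p₅) (h56 : p₅ ≤ p₆)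
    (hsum : p₁ + p₂ + p₃ + p₄ + p₅ + p₆ = 1)
    (hsq : p₁ ^ 2 + p₂ ^ 2 + p₃ ^ 2 + p₄ ^ 2 + p₅ ^ 2 + p₆ ^ 2 + A ^ 2 = 1)
    (hσ : 0 ≤ p₁ + p₂ + p₃ + p₄) (he : 0 ≤ 2 * p₁ + p₂ + p₃ + p₄) :
    15 * (p₁ + p₂ + p₃ + p₄) ^ 2 ≤ 8 * A ^ 2 := by
  have h1 : (p₁ + p₂ + p₃ + p₄ + p₅ + p₆) ^ 2 = 1 := by rw [hsum]; norm_num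
  have d1 : (0:ℝ) ≤ p₂ - p₁ := sub_nonneg.2 h12
  have d2 : (0:ℝ) ≤ p₃ - p₂ := sub_nonneg.2 h23
  have d3 : (0:ℝ) ≤ p₄ - p₃ := sub_nonneg.2 h34
  have d4 : (0:ℝ) ≤ p₅ - p₄ := sub_nonneg.2 h45
  have d5 : (0:ℝ) ≤ p₆ - p₅ := sub_nonneg.2 h56
  nlinarith [mul_nonneg d1 he, mul_nonneg d2 he, mul_nonneg d3 he,
    mul_nonneg d1 d2, mul_nonneg d1 d3, mul_nonneg d1 d4, mul_nonneg d1 d5,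
    mul_nonneg d2 d3, mul_nonneg d2 d4, mul_nonneg d2 d5,
    mul_nonneg d3 d4, mul_nonneg d3 d5, mul_nonneg d4 d5,
    mul_nonneg d1 hσ, mul_nonneg d2 hσ, mul_nonneg d4 hσ, mul_nonneg d5 hσ,
    mul_nonneg d3 d3, mul_nonneg d4 d4]

/-- The critical dilaton coupling for a 1-form in 7 spacetime dimensions
(`d = 6` spatial dimensions) is `λ_c = 4√2/√15`. -/
theorem subcritical_one_form_d6 (lam : ℝ) :
    (∃ p₁ p₂ p₃ p₄ p₅ p₆ A : ℝ,
      p₁ ≤ p₂ ∧ p₂ ≤ p₃ ∧ p₃ ≤ p₄ ∧ p₄ ≤ p₅ ∧ p₅ ≤ p₆ ∧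
      p₁ + p₂ + p₃ + p₄ + p₅ + p₆ = 1 ∧
      p₁ ^ 2 + p₂ ^ 2 + p₃ ^ 2 + p₄ ^ 2 + p₅ ^ 2 + p₆ ^ 2 + A ^ 2 = 1 ∧
      2 * p₁ - lam * A > 0 ∧ 2 * (p₁ + p₂ + p₃ + p₄) + lam * A > 0) ↔
    |lam| < 4 * Real.sqrt 2 / Real.sqrt 15 := by
  have hs2 : Real.sqrt 2 ^ 2 = 2 := Real.sq_sqrt (by norm_num)
  have hs15 : Real.sqrt 15 ^ 2 = 15 := Real.sq_sqrt (by norm_num)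
  have h15pos : 0 < Real.sqrt 15 := Real.sqrt_pos.2 (by norm_num)
  have hcpos : 0 < 4 * Real.sqrt 2 / Real.sqrt 15 := by positivity
  have hc2 : (4 * Real.sqrt 2 / Real.sqrt 15) ^ 2 = 32 / 15 := by
    rw [div_pow, mul_pow, hs2, hs15]; norm_num
  constructor
  · rintro ⟨p₁, p₂, p₃, p₄, p₅, p₆, A, h12, h23, h34, h45, h56, hsum, hsq, hE, hM⟩
    have key : lam ^ 2 < 32 / 15 := by
      rcases le_or_gt 0 (lam * A) with hs | hs
      · -- electric case: 0 ≤ lam*A < 2 p₁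
        have hp1 : 0 < p₁ := by linarith
        have hAe : 15 * p₁ ^ 2 ≤ 8 * A ^ 2 :=
          elec_aux p₁ p₂ p₃ p₄ p₅ p₆ A h12 h23 h34 h45 h56 hsum hsq hp1
        have hp2 : 0 < 15 * p₁ ^ 2 := by positivity
        have hA2 : 0 < A ^ 2 := by linarith
        have hprod : 0 < (2 * p₁ - lam * A) * (2 * p₁ + lam * A) :=
          mul_pos (by linarith) (by linarith)
        have hmp : (lam * A) ^ 2 = lam ^ 2 * A ^ 2 := by ring
        have hlt : lam ^ 2 * A ^ 2 < (32 / 15) * A ^ 2 := by nlinarith [hprod]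
        exact lt_of_mul_lt_mul_right hlt hA2.le
      · -- magnetic case: -2σ < lam*A < 0
        have hσ : 0 ≤ p₁ + p₂ + p₃ + p₄ := by linarith
        have he : 0 ≤ 2 * p₁ + p₂ + p₃ + p₄ := by linarith
        have hAm : 15 * (p₁ + p₂ + p₃ + p₄) ^ 2 ≤ 8 * A ^ 2 :=
          mag_aux p₁ p₂ p₃ p₄ p₅ p₆ A h12 h23 h34 h45 h56 hsum hsq hσ he
        have hσpos : 0 < p₁ + p₂ + p₃ + p₄ := by linarith
        have hσ2 : 0 < 15 * (p₁ + p₂ + p₃ + p₄) ^ 2 := by positivity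
        have hA2 : 0 < A ^ 2 := by linarith
        have hprod : 0 < (2 * (p₁ + p₂ + p₃ + p₄) + lam * A) *
            (2 * (p₁ + p₂ + p₃ + p₄) - lam * A) := mul_pos (by linarith) (by linarith)
        have hmp : (lam * A) ^ 2 = lam ^ 2 * A ^ 2 := by ring
        have hlt : lam ^ 2 * A ^ 2 < (32 / 15) * A ^ 2 := by nlinarith [hprod]
        exact lt_of_mul_lt_mul_right hlt hA2.le
    have habs : |lam| ^ 2 < (4 * Real.sqrt 2 / Real.sqrt 15) ^ 2 := by
      rw [sq_abs, hc2]; exact key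
    exact lt_of_pow_lt_pow_left₀ 2 hcpos.le habs
  · intro h
    have hl2 : lam ^ 2 < 32 / 15 := by
      have h1 : |lam| ^ 2 < (4 * Real.sqrt 2 / Real.sqrt 15) ^ 2 :=
        pow_lt_pow_left₀ h (abs_nonneg lam) (by norm_num)
      rwa [sq_abs, hc2] at h1
    have hr : Real.sqrt (5 / 6) ^ 2 = 5 / 6 := Real.sq_sqrt (by norm_num)
    have hrpos : 0 < Real.sqrt (5 / 6) := Real.sqrt_pos.2 (by norm_num)
    have hkey : |lam| * Real.sqrt (5 / 6) < 4 / 3 := by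
      have h1 : (|lam| * Real.sqrt (5 / 6)) ^ 2 < (4 / 3) ^ 2 := by
        rw [mul_pow, sq_abs, hr]; linarith
      exact lt_of_pow_lt_pow_left₀ 2 (by norm_num) h1
    rcases le_or_gt 0 lam with hl | hl
    · refine ⟨1/6, 1/6, 1/6, 1/6, 1/6, 1/6, -Real.sqrt (5/6),
        le_refl _, le_refl _, le_refl _, le_refl _, le_refl _, by norm_num, ?_, ?_, ?_⟩
      · have : (-Real.sqrt (5/6)) ^ 2 = 5/6 := by rw [neg_sq]; exact hr
        rw [this]; norm_num
      · have := mul_nonneg hl hrpos.le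
        nlinarith
      · have h2 : lam * Real.sqrt (5/6) < 4/3 := by
          rwa [abs_of_nonneg hl] at hkey
        nlinarith
    · refine ⟨1/6, 1/6, 1/6, 1/6, 1/6, 1/6, Real.sqrt (5/6),
        le_refl _, le_refl _, le_refl _, le_refl _, le_refl _, by norm_num, ?_, ?_, ?_⟩
      · rw [hr]; norm_num
      · have := mul_nonneg (neg_nonneg.2 hl.le) hrpos.le
        nlinarith
      · have h2 : -lam * Real.sqrt (5/6) < 4/3 := by
          rw [← abs_of_neg hl]; exact hkey
        nlinarith
end

section
/- Let λ be a real number and d = 7. There exist real numbers p₁ ≤ p₂ ≤ ⋯ ≤ p₇ and A satisfying p₁ + ⋯ + p₇ = 1 and p₁² + ⋯ + p₇² + A² = 1 together with 2p₁ − λA > 0 and 2(p₁ + ⋯ + p₅) + λA > 0, if and only if |λ| < 2√2/√3. (The critical dilaton coupling for a 1-form in 8 spacetime dimensions is λ_c = 2√2/√3.) -/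
set_option maxHeartbeats 1000000

/-- Key inequality: for generalized Kasner exponents in `d = 7` satisfying both
the electric and magnetic wall conditions (with `t = λA`), we get `3t² < 8A²`.
The proof is an explicit positive combination of products of the constraints. -/
lemma subcritical_one_form_d7_key (p₁ p₂ p₃ p₄ p₅ p₆ p₇ t A : ℝ)
    (h12 : p₁ ≤ p₂) (h23 : p₂ ≤ p₃) (h34 : p₃ ≤ p₄) (h45 : p₄ ≤ p₅)
    (h56 : p₅ ≤ p₆) (h67 : p₆ ≤ p₇)
    (hsum : p₁ + p₂ + p₃ + p₄ + p₅ + p₆ + p₇ = 1)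
    (hsq : p₁ ^ 2 + p₂ ^ 2 + p₃ ^ 2 + p₄ ^ 2 + p₅ ^ 2 + p₆ ^ 2 + p₇ ^ 2 + A ^ 2 = 1)
    (hE : 0 < 2 * p₁ - t) (hM : 0 < 2 * (p₁ + p₂ + p₃ + p₄ + p₅) + t) :
    3 * t ^ 2 < 8 * A ^ 2 := by
  have q12 := sub_nonneg.2 h12
  have q23 := sub_nonneg.2 h23
  have q34 := sub_nonneg.2 h34
  have q45 := sub_nonneg.2 h45
  have q56 := sub_nonneg.2 h56
  have q67 := sub_nonneg.2 h67
  have hss : (p₁ + p₂ + p₃ + p₄ + p₅ + p₆ + p₇) ^ 2 = 1 := by rw [hsum]; norm_num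
  linarith [hss, hsq, mul_pos hE hM, mul_pos hE hE, mul_pos hM hM,
    mul_nonneg hE.le q12, mul_nonneg hE.le q23, mul_nonneg hE.le q34,
    mul_nonneg hE.le q45, mul_nonneg hE.le q56, mul_nonneg hE.le q67,
    mul_nonneg hM.le q12, mul_nonneg hM.le q23, mul_nonneg hM.le q34,
    mul_nonneg hM.le q45, mul_nonneg hM.le q56, mul_nonneg hM.le q67,
    mul_nonneg q12 q23, mul_nonneg q12 q34, mul_nonneg q12 q45,
    mul_nonneg q12 q56, mul_nonneg q12 q67,
    mul_nonneg q23 q23, mul_nonneg q23 q34, mul_nonneg q23 q45,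
    mul_nonneg q23 q56, mul_nonneg q23 q67,
    mul_nonneg q34 q34, mul_nonneg q34 q45, mul_nonneg q34 q56,
    mul_nonneg q34 q67,
    mul_nonneg q45 q45, mul_nonneg q45 q56, mul_nonneg q45 q67,
    mul_nonneg q56 q56, mul_nonneg q56 q67]

/-- The critical dilaton coupling for a 1-form in 8 spacetime dimensions
(`d = 7` spatial dimensions) is `λ_c = 2√2/√3`. -/
theorem subcritical_one_form_d7 (lam : ℝ) :
    (∃ p₁ p₂ p₃ p₄ p₅ p₆ p₇ A : ℝ,
      p₁ ≤ p₂ ∧ p₂ ≤ p₃ ∧ p₃ ≤ p₄ ∧ p₄ ≤ p₅ ∧ p₅ ≤ p₆ ∧ p₆ ≤ p₇ ∧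
      p₁ + p₂ + p₃ + p₄ + p₅ + p₆ + p₇ = 1 ∧
      p₁ ^ 2 + p₂ ^ 2 + p₃ ^ 2 + p₄ ^ 2 + p₅ ^ 2 + p₆ ^ 2 + p₇ ^ 2 + A ^ 2 = 1 ∧
      2 * p₁ - lam * A > 0 ∧ 2 * (p₁ + p₂ + p₃ + p₄ + p₅) + lam * A > 0) ↔
    |lam| < 2 * Real.sqrt 2 / Real.sqrt 3 := by
  have h2 : (Real.sqrt 2) ^ 2 = 2 := Real.sq_sqrt (by norm_num)
  have h3 : (Real.sqrt 3) ^ 2 = 3 := Real.sq_sqrt (by norm_num)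
  have h3pos : 0 < Real.sqrt 3 := Real.sqrt_pos.mpr (by norm_num)
  have h2pos : 0 < Real.sqrt 2 := Real.sqrt_pos.mpr (by norm_num)
  have hcpos : 0 < 2 * Real.sqrt 2 / Real.sqrt 3 := by positivity
  have hc2 : (2 * Real.sqrt 2 / Real.sqrt 3) ^ 2 = 8 / 3 := by
    rw [div_pow, mul_pow, h2, h3]; norm_num
  constructor
  · rintro ⟨p₁, p₂, p₃, p₄, p₅, p₆, p₇, A, h12, h23, h34, h45, h56, h67,
      hsum, hsq, hE, hM⟩
    have key : 3 * (lam * A) ^ 2 < 8 * A ^ 2 :=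
      subcritical_one_form_d7_key p₁ p₂ p₃ p₄ p₅ p₆ p₇ (lam * A) A
        h12 h23 h34 h45 h56 h67 hsum hsq hE hM
    have hA2 : 0 < A ^ 2 := by nlinarith [key, sq_nonneg (lam * A)]
    have hl2 : lam ^ 2 < 8 / 3 := by
      by_contra hcon
      push_neg at hcon
      have hthis : 0 ≤ (lam ^ 2 - 8 / 3) * A ^ 2 :=
        mul_nonneg (by linarith) hA2.le
      nlinarith [key, hthis]
    exact abs_lt_of_sq_lt_sq (by rw [hc2]; exact hl2) hcpos.le
  · intro h
    have hl2 : lam ^ 2 < 8 / 3 := by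
      obtain ⟨ha, hb⟩ := abs_lt.1 h
      have := sq_lt_sq' ha hb
      rwa [hc2] at this
    rcases le_or_gt (lam ^ 2) (8 / 21) with hs | hs
    · -- isotropic Kasner solution works for small coupling
      have h67 : (Real.sqrt (6 / 7)) ^ 2 = 6 / 7 := Real.sq_sqrt (by norm_num)
      have h67n : 0 ≤ Real.sqrt (6 / 7) := Real.sqrt_nonneg _
      rcases le_or_gt 0 lam with hl | hl
      · refine ⟨1/7, 1/7, 1/7, 1/7, 1/7, 1/7, 1/7, -Real.sqrt (6/7),
          le_refl _, le_refl _, le_refl _, le_refl _, le_refl _, le_refl _,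
          by norm_num, by nlinarith [h67], ?_, ?_⟩
        · have hx : 0 ≤ lam * Real.sqrt (6/7) := mul_nonneg hl h67n
          nlinarith [hx]
        · nlinarith [mul_nonneg hl h67n,
            mul_nonneg (sub_nonneg.2 hs) (sq_nonneg (Real.sqrt (6/7))),
            sq_nonneg (lam * Real.sqrt (6/7) - 4/7), h67]
      · refine ⟨1/7, 1/7, 1/7, 1/7, 1/7, 1/7, 1/7, Real.sqrt (6/7),
          le_refl _, le_refl _, le_refl _, le_refl _, le_refl _, le_refl _,
          by norm_num, by nlinarith [h67], ?_, ?_⟩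
        · have hx : 0 ≤ (-lam) * Real.sqrt (6/7) := mul_nonneg (by linarith) h67n
          nlinarith [hx]
        · nlinarith [mul_nonneg (neg_nonneg.2 hl.le) h67n,
            mul_nonneg (sub_nonneg.2 hs) (sq_nonneg (Real.sqrt (6/7))),
            sq_nonneg (lam * Real.sqrt (6/7) + 4/7), h67]
    · -- anisotropic family near the critical solution
      have hDpos : (0:ℝ) < 8 + 21 * lam ^ 2 := by positivity
      set D : ℝ := 8 + 21 * lam ^ 2 with hD
      have hab : (8 - 15 * lam ^ 2) / D ≤ 6 * lam ^ 2 / D := by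
        rw [div_le_div_iff₀ hDpos hDpos]
        nlinarith
      refine ⟨(8 - 15 * lam ^ 2) / D, 6 * lam ^ 2 / D, 6 * lam ^ 2 / D,
        6 * lam ^ 2 / D, 6 * lam ^ 2 / D, 6 * lam ^ 2 / D, 6 * lam ^ 2 / D,
        -24 * lam / D, hab, le_refl _, le_refl _, le_refl _, le_refl _, le_refl _,
        ?_, ?_, ?_, ?_⟩
      · field_simp
        ring
      · field_simp
        ring
      · have hval : 2 * ((8 - 15 * lam ^ 2) / D) - lam * (-24 * lam / D)
            = (16 - 6 * lam ^ 2) / D := by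
          field_simp
          ring
        rw [hval]
        exact div_pos (by nlinarith) hDpos
      · have hval : 2 * ((8 - 15 * lam ^ 2) / D + 6 * lam ^ 2 / D + 6 * lam ^ 2 / D
            + 6 * lam ^ 2 / D + 6 * lam ^ 2 / D) + lam * (-24 * lam / D)
            = (16 - 6 * lam ^ 2) / D := by
          field_simp
          ring
        rw [hval]
        exact div_pos (by nlinarith) hDpos
end

section
/- Let λ be a real number and d = 8. There exist real numbers p₁ ≤ p₂ ≤ ⋯ ≤ p₈ and A satisfying p₁ + ⋯ + p₈ = 1 and p₁² + ⋯ + p₈² + A² = 1 together with 2p₁ − λA > 0 and 2(p₁ + ⋯ + p₆) + λA > 0, if and only if |λ| < 4√2/√7. (The critical dilaton coupling for a 1-form in 9 spacetime dimensions is λ_c = 4√2/√7, which coincides with the Kaluza–Klein coupling 2√(d/(d−1)) for d = 8.) -/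
/-!
Adding the two wall inequalities gives `p₁ + (p₁ + ⋯ + p₆) > 0`, and on the cone of ordered
exponents with this property `7 (p₁ + ⋯ + p₆)² ≤ 8 A²`. Since the walls also confine `λA` to
`(-2 (p₁ + ⋯ + p₆), 2 (p₁ + ⋯ + p₆))`, this forces `λ² < 32/7`.

Conversely, at the Kasner point `(-2/5, -2/5, 3/10, …, 3/10)` the window
`-2p₁ < λ|A| < 2 (p₁ + ⋯ + p₆)` shrinks to the single value `λ = 4√2/√7`, and every smaller `λ ≥ 0`
admits a stable point on the segment joining it to the isotropic point; `A ↦ -A` handles `λ < 0`.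
-/

open Real

def IsStableKasner (lam p₁ p₂ p₃ p₄ p₅ p₆ p₇ p₈ A : ℝ) : Prop :=
  p₁ ≤ p₂ ∧ p₂ ≤ p₃ ∧ p₃ ≤ p₄ ∧ p₄ ≤ p₅ ∧ p₅ ≤ p₆ ∧ p₆ ≤ p₇ ∧ p₇ ≤ p₈ ∧
    p₁ + p₂ + p₃ + p₄ + p₅ + p₆ + p₇ + p₈ = 1 ∧
    p₁ ^ 2 + p₂ ^ 2 + p₃ ^ 2 + p₄ ^ 2 + p₅ ^ 2 + p₆ ^ 2 + p₇ ^ 2 + p₈ ^ 2 + A ^ 2 = 1 ∧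
    2 * p₁ - lam * A > 0 ∧
    2 * (p₁ + p₂ + p₃ + p₄ + p₅ + p₆) + lam * A > 0

def HasStableKasner (lam : ℝ) : Prop :=
  ∃ p₁ p₂ p₃ p₄ p₅ p₆ p₇ p₈ A : ℝ, IsStableKasner lam p₁ p₂ p₃ p₄ p₅ p₆ p₇ p₈ A

theorem IsStableKasner.neg {lam p₁ p₂ p₃ p₄ p₅ p₆ p₇ p₈ A : ℝ}
    (h : IsStableKasner lam p₁ p₂ p₃ p₄ p₅ p₆ p₇ p₈ A) :
    IsStableKasner (-lam) p₁ p₂ p₃ p₄ p₅ p₆ p₇ p₈ (-A) := by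
  rw [IsStableKasner, neg_mul_neg, neg_sq]
  exact h

theorem HasStableKasner.neg {lam : ℝ} (h : HasStableKasner lam) : HasStableKasner (-lam) :=
  let ⟨p₁, p₂, p₃, p₄, p₅, p₆, p₇, p₈, A, hp⟩ := h
  ⟨p₁, p₂, p₃, p₄, p₅, p₆, p₇, p₈, -A, hp.neg⟩

/-- In the coordinates `h = p₁ + (p₁ + ⋯ + p₆)` and `qᵢ = pᵢ₊₁ - pᵢ`, which are nonnegative, the
difference of the two sides is a quadratic form with nonnegative coefficients. -/
theorem seven_mul_sq_sum_six_le {p₁ p₂ p₃ p₄ p₅ p₆ p₇ p₈ : ℝ}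
    (h₁₂ : p₁ ≤ p₂) (h₂₃ : p₂ ≤ p₃) (h₃₄ : p₃ ≤ p₄) (h₄₅ : p₄ ≤ p₅) (h₅₆ : p₅ ≤ p₆)
    (h₆₇ : p₆ ≤ p₇) (h₇₈ : p₇ ≤ p₈) (h : 0 ≤ p₁ + (p₁ + p₂ + p₃ + p₄ + p₅ + p₆)) :
    7 * (p₁ + p₂ + p₃ + p₄ + p₅ + p₆) ^ 2 ≤
      8 * (p₁ + p₂ + p₃ + p₄ + p₅ + p₆ + p₇ + p₈) ^ 2 -
        8 * (p₁ ^ 2 + p₂ ^ 2 + p₃ ^ 2 + p₄ ^ 2 + p₅ ^ 2 + p₆ ^ 2 + p₇ ^ 2 + p₈ ^ 2) := by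
  nlinarith [sub_nonneg.2 h₁₂, sub_nonneg.2 h₂₃, sub_nonneg.2 h₃₄, sub_nonneg.2 h₄₅,
    sub_nonneg.2 h₅₆, sub_nonneg.2 h₆₇, sub_nonneg.2 h₇₈]

theorem IsStableKasner.seven_mul_sq_lt {lam p₁ p₂ p₃ p₄ p₅ p₆ p₇ p₈ A : ℝ}
    (h : IsStableKasner lam p₁ p₂ p₃ p₄ p₅ p₆ p₇ p₈ A) : 7 * lam ^ 2 < 32 := by
  obtain ⟨h₁₂, h₂₃, h₃₄, h₄₅, h₅₆, h₆₇, h₇₈, hsum, hsq, helec, hmag⟩ := h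
  set s := p₁ + p₂ + p₃ + p₄ + p₅ + p₆
  have hs : 0 < s := by linarith
  have hwalls : (lam * A) ^ 2 < (2 * s) ^ 2 := sq_lt_sq' (by linarith) (by linarith)
  have hkey : 7 * s ^ 2 ≤ 8 * A ^ 2 := by
    have := seven_mul_sq_sum_six_le h₁₂ h₂₃ h₃₄ h₄₅ h₅₆ h₆₇ h₇₈ (by linarith)
    rw [hsum] at this
    linarith
  have hA : 0 < A ^ 2 := by nlinarith
  exact lt_of_mul_lt_mul_right (by nlinarith : 7 * lam ^ 2 * A ^ 2 < 32 * A ^ 2) hA.le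

/-- For these points `A² = 1/2 + 6b - 24b²`, `2p₁ = 1 - 6b` and `2(p₁ + ⋯ + p₆) = 2 - 4b`, so
`helec` and `hmag` are the two wall inequalities. -/
theorem isStableKasner_segment {lam b : ℝ} (hlam : 0 ≤ lam) (hb₁ : 1 / 8 ≤ b) (hb₂ : b ≤ 3 / 10)
    (helec : 6 * b - 1 < √(lam ^ 2 * (1 / 2 + 6 * b - 24 * b ^ 2)))
    (hmag : lam ^ 2 * (1 / 2 + 6 * b - 24 * b ^ 2) < (2 - 4 * b) ^ 2) :
    IsStableKasner lam (1 / 2 - 3 * b) (1 / 2 - 3 * b) b b b b b b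
      (-√(1 / 2 + 6 * b - 24 * b ^ 2)) := by
  have hS : 0 ≤ 1 / 2 + 6 * b - 24 * b ^ 2 := by nlinarith
  have hlamA :
      lam * √(1 / 2 + 6 * b - 24 * b ^ 2) = √(lam ^ 2 * (1 / 2 + 6 * b - 24 * b ^ 2)) := by
    rw [sqrt_mul (sq_nonneg lam), sqrt_sq hlam]
  have hmag' : √(lam ^ 2 * (1 / 2 + 6 * b - 24 * b ^ 2)) < 2 - 4 * b :=
    (sqrt_lt' (by linarith)).2 hmag
  refine ⟨le_rfl, by linarith, le_rfl, le_rfl, le_rfl, le_rfl, le_rfl, by ring, ?_, ?_, ?_⟩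
  · rw [neg_sq, sq_sqrt hS]
    ring
  · rw [mul_neg, hlamA]
    linarith
  · rw [mul_neg, hlamA]
    linarith

theorem hasStableKasner_of_sq_le_two {lam : ℝ} (hlam : 0 ≤ lam) (h : lam ^ 2 ≤ 2) :
    HasStableKasner lam := by
  refine ⟨_, _, _, _, _, _, _, _, _, isStableKasner_segment (b := 1 / 8) hlam le_rfl
    (by norm_num) ?_ ?_⟩
  · exact (by norm_num : (6 : ℝ) * (1 / 8) - 1 < 0).trans_le (sqrt_nonneg _)
  · nlinarith

/-- Here `v = 32 - 7λ²`. At `v = 0` this is the critical exponent `3/10`, and its slope there lies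
strictly between the slopes of the curves on which the electric and the magnetic inequality become
equalities. -/
noncomputable def nearCriticalExponent (v : ℝ) : ℝ := 3 / 10 - v * (v + 20) / 40000

theorem electric_nearCritical {v : ℝ} (hv₀ : 0 < v) (hv : v ≤ 18) :
    (6 * nearCriticalExponent v - 1) ^ 2 <
      (32 - v) / 7 * (1 / 2 + 6 * nearCriticalExponent v - 24 * nearCriticalExponent v ^ 2) := by
  unfold nearCriticalExponent
  nlinarith [pow_pos hv₀ 2, pow_pos hv₀ 3, mul_nonneg (pow_pos hv₀ 3).le (sub_nonneg.2 hv)]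

theorem magnetic_nearCritical {v : ℝ} (hv₀ : 0 < v) (hv : v ≤ 18) :
    (32 - v) / 7 * (1 / 2 + 6 * nearCriticalExponent v - 24 * nearCriticalExponent v ^ 2) <
      (2 - 4 * nearCriticalExponent v) ^ 2 := by
  unfold nearCriticalExponent
  nlinarith [pow_pos hv₀ 2, pow_pos hv₀ 3, mul_nonneg (pow_pos hv₀ 3).le (sub_nonneg.2 hv)]

theorem hasStableKasner_of_two_le_sq {lam : ℝ} (hlam : 0 ≤ lam) (h₂ : 2 ≤ lam ^ 2)
    (hc : 7 * lam ^ 2 < 32) : HasStableKasner lam := by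
  set v := 32 - 7 * lam ^ 2 with hv_def
  have hv₀ : 0 < v := by linarith
  have hv : v ≤ 18 := by linarith
  have hu : lam ^ 2 = (32 - v) / 7 := by rw [hv_def]; ring
  have hb : 1 / 6 ≤ nearCriticalExponent v := by unfold nearCriticalExponent; nlinarith
  refine ⟨_, _, _, _, _, _, _, _, _, isStableKasner_segment (b := nearCriticalExponent v) hlam
    (by linarith) ?_ ?_ ?_⟩
  · unfold nearCriticalExponent; nlinarith
  · rw [lt_sqrt (by linarith), hu]
    exact electric_nearCritical hv₀ hv
  · rw [hu]
    exact magnetic_nearCritical hv₀ hv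

theorem hasStableKasner_of_seven_mul_sq_lt {lam : ℝ} (h : 7 * lam ^ 2 < 32) :
    HasStableKasner lam := by
  wlog hlam : 0 ≤ lam generalizing lam
  · simpa using (this (lam := -lam) (by simpa using h) (by linarith)).neg
  rcases le_total (lam ^ 2) 2 with h₂ | h₂
  · exact hasStableKasner_of_sq_le_two hlam h₂
  · exact hasStableKasner_of_two_le_sq hlam h₂ h

theorem abs_lt_four_mul_sqrt_two_div_sqrt_seven_iff (lam : ℝ) :
    |lam| < 4 * √2 / √7 ↔ 7 * lam ^ 2 < 32 := by
  have hc : (4 * √2 / √7) ^ 2 = 32 / 7 := by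
    rw [div_pow, mul_pow, sq_sqrt (by norm_num), sq_sqrt (by norm_num)]
    norm_num
  rw [← pow_lt_pow_iff_left₀ (abs_nonneg lam) (by positivity) two_ne_zero, sq_abs, hc]
  constructor <;> intro h <;> linarith

/-- The critical dilaton coupling for a 1-form in 9 spacetime dimensions
(`d = 8` spatial dimensions) is `λ_c = 4√2/√7`. -/
theorem subcritical_one_form_d8 (lam : ℝ) :
    (∃ p₁ p₂ p₃ p₄ p₅ p₆ p₇ p₈ A : ℝ,
      p₁ ≤ p₂ ∧ p₂ ≤ p₃ ∧ p₃ ≤ p₄ ∧ p₄ ≤ p₅ ∧ p₅ ≤ p₆ ∧ p₆ ≤ p₇ ∧ p₇ ≤ p₈ ∧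
      p₁ + p₂ + p₃ + p₄ + p₅ + p₆ + p₇ + p₈ = 1 ∧
      p₁ ^ 2 + p₂ ^ 2 + p₃ ^ 2 + p₄ ^ 2 + p₅ ^ 2 + p₆ ^ 2 + p₇ ^ 2 + p₈ ^ 2
        + A ^ 2 = 1 ∧
      2 * p₁ - lam * A > 0 ∧
      2 * (p₁ + p₂ + p₃ + p₄ + p₅ + p₆) + lam * A > 0) ↔
    |lam| < 4 * Real.sqrt 2 / Real.sqrt 7 := by
  change HasStableKasner lam ↔ _
  rw [abs_lt_four_mul_sqrt_two_div_sqrt_seven_iff]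
  exact ⟨fun ⟨_, _, _, _, _, _, _, _, _, h⟩ => h.seven_mul_sq_lt,
    hasStableKasner_of_seven_mul_sq_lt⟩
end

section
/- Let d ≥ 9 be an integer. For every real number λ there exist real numbers p₁ ≤ p₂ ≤ ⋯ ≤ p_d and A satisfying p₁ + ⋯ + p_d = 1 and p₁² + ⋯ + p_d² + A² = 1 together with 2p₁ − λA > 0 and 2(p₁ + ⋯ + p_{d−2}) + λA > 0. (For a 1-form in spacetime dimension D = d + 1 ≥ 10 the critical dilaton coupling is infinite: the system is subcritical for every value of λ.) -/
/-!
Take `p = (a, a, a, b, …, b)` with `3a + (d - 3)b = 1`. For `λ² ≤ 2` the isotropic point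
`a = b = 1/d` with `λA = -|λ|√(1 - 1/d)` satisfies both wall inequalities. For `λ² ≥ 2` choose
`λA = a + 2b - 1`, the midpoint of the window `2(p_{d-1} + p_d) - 2 < λA < 2p₁`, at which both
inequalities reduce to `(d + 3)b < 4`. The remaining condition `∑ pᵢ² + A² = 1` is then a
quadratic equation `G(b) = 0`, and `G` changes sign between the isotropic point `b = 1/d` and the
point `b = 4/(d + 3)` where the window closes: there `(d + 3)² G = 2λ²(d - 1)(d - 9) + 4(d - 5)²`,
which is where `d ≥ 9` enters.
-/

open Finset

lemma sum_filter_val_lt_ite {d m : ℕ} (hm : m ≤ d) (h3 : 3 ≤ m) (a b : ℝ) :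
    ∑ i ∈ univ.filter (fun i : Fin d => (i : ℕ) < m), (if (i : ℕ) < 3 then a else b)
      = 3 * a + (m - 3 : ℝ) * b := by
  have hlow : (univ.filter fun i : Fin d => (i : ℕ) < m).filter (fun i : Fin d => (i : ℕ) < 3)
      = univ.filter fun i : Fin d => (i : ℕ) < 3 := by
    rw [filter_filter]; congr! 2; omega
  have hcard := card_filter_add_card_filter_not (s := univ.filter fun i : Fin d => (i : ℕ) < m)
    (p := fun i : Fin d => (i : ℕ) < 3)
  rw [hlow, Fin.card_filter_val_lt, Fin.card_filter_val_lt, min_eq_right hm,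
    min_eq_right (h3.trans hm)] at hcard
  rw [sum_ite, sum_const, sum_const, hlow, Fin.card_filter_val_lt, min_eq_right (h3.trans hm),
    nsmul_eq_mul, nsmul_eq_mul, Nat.eq_sub_of_add_eq' hcard, Nat.cast_sub h3]
  norm_num

/-- The Kasner and wall conditions for the exponents `p = (a, a, a, b, …, b)` in `d` spatial
dimensions, with `p₁ + ⋯ + p_{d-2} = 3a + (d - 5)b`. -/
def IsBlockKasnerWitness (d lam a b A : ℝ) : Prop :=
  a ≤ b ∧ 3 * a + (d - 3) * b = 1 ∧ 3 * a ^ 2 + (d - 3) * b ^ 2 + A ^ 2 = 1 ∧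
    lam * A < 2 * a ∧ 0 < 2 * (3 * a + (d - 5) * b) + lam * A

lemma IsBlockKasnerWitness.neg {d lam a b A : ℝ} (h : IsBlockKasnerWitness d lam a b A) :
    IsBlockKasnerWitness d (-lam) a b (-A) := by
  obtain ⟨hab, hsum, hsq, hel, hmag⟩ := h
  exact ⟨hab, hsum, by rwa [neg_sq], by rwa [neg_mul_neg], by rwa [neg_mul_neg]⟩

lemma exists_isBlockKasnerWitness_of_sq_le_two {d lam : ℝ} (hd : 9 ≤ d) (hlam : lam ^ 2 ≤ 2) :
    ∃ a b A, IsBlockKasnerWitness d lam a b A := by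
  wlog hlam₀ : 0 ≤ lam generalizing lam
  · obtain ⟨a, b, A, h⟩ := this (by rwa [neg_sq]) (by linarith)
    exact ⟨a, b, -A, by simpa using h.neg⟩
  have hd₀ : 0 < d := by linarith
  have hs : √(1 - 1 / d) ^ 2 = 1 - 1 / d :=
    Real.sq_sqrt (by rw [sub_nonneg, div_le_one hd₀]; linarith)
  refine ⟨1 / d, 1 / d, -√(1 - 1 / d), le_rfl, by field_simp; ring, ?_, ?_, ?_⟩
  · rw [neg_sq, hs]; field_simp; ring
  · have : 0 ≤ lam * √(1 - 1 / d) := by positivity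
    have : 0 < 1 / d := by positivity
    linarith
  · -- `λ√(1 - 1/d) ≤ (λ² + 1)/2 ≤ 3/2 < 14/9 ≤ 2(d - 2)/d`
    have hamgm : lam * √(1 - 1 / d) ≤ 3 / 2 := by
      nlinarith [sq_nonneg (lam - √(1 - 1 / d)), one_div_pos.mpr hd₀]
    have : 14 / 9 ≤ 2 * (3 * (1 / d) + (d - 5) * (1 / d)) := by
      rw [div_le_iff₀ (by norm_num), ← sub_nonneg]
      have : 2 * (3 * (1 / d) + (d - 5) * (1 / d)) * 9 - 14 = 4 * (d - 9) / d := by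
        field_simp; ring
      rw [this]; positivity
    linarith

lemma exists_isBlockKasnerWitness_of_two_le_sq {d lam : ℝ} (hd : 9 ≤ d) (hlam : 2 ≤ lam ^ 2) :
    ∃ a b A, IsBlockKasnerWitness d lam a b A := by
  have hlam₀ : lam ≠ 0 := by rintro rfl; norm_num at hlam
  have hd₀ : 0 < d := by linarith
  set a : ℝ → ℝ := fun b => (1 - (d - 3) * b) / 3 with ha
  set G : ℝ → ℝ := fun b => lam ^ 2 * (3 * a b ^ 2 + (d - 3) * b ^ 2 - 1) + (a b + 2 * b - 1) ^ 2
    with hG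
  have hlo : G (1 / d) < 0 := by
    have : G (1 / d) = ((d - 3) ^ 2 - lam ^ 2 * d * (d - 1)) / d ^ 2 := by
      simp only [hG, ha]; field_simp; ring
    rw [this]
    exact div_neg_of_neg_of_pos (by nlinarith) (by positivity)
  have hhi : 0 < G (4 / (d + 3)) := by
    have : G (4 / (d + 3)) = (2 * lam ^ 2 * (d - 1) * (d - 9) + 4 * (d - 5) ^ 2) / (d + 3) ^ 2 := by
      simp only [hG, ha]; field_simp; ring
    rw [this]
    have : 0 ≤ 2 * lam ^ 2 * (d - 1) * (d - 9) :=
      mul_nonneg (mul_nonneg (by positivity) (by linarith)) (by linarith)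
    exact div_pos (by nlinarith) (by positivity)
  have hlohi : 1 / d ≤ 4 / (d + 3) := by
    rw [div_le_div_iff₀ hd₀ (by linarith)]; linarith
  obtain ⟨b, ⟨hb₁, hb₂⟩, hGb⟩ :=
    intermediate_value_Ioo hlohi (by fun_prop : Continuous G).continuousOn ⟨hlo, hhi⟩
  rw [div_lt_iff₀ hd₀] at hb₁
  rw [lt_div_iff₀ (by linarith)] at hb₂
  have hlamA : lam * ((a b + 2 * b - 1) / lam) = a b + 2 * b - 1 := by field_simp
  refine ⟨a b, b, (a b + 2 * b - 1) / lam, ?_, ?_, ?_, ?_, ?_⟩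
  · simp only [ha]; linarith
  · simp only [ha]; ring
  · have hGb' :
        lam ^ 2 * (3 * a b ^ 2 + (d - 3) * b ^ 2 + ((a b + 2 * b - 1) / lam) ^ 2 - 1) = 0 := by
      rw [← hGb, hG]; field_simp; ring
    linarith [(mul_eq_zero.mp hGb').resolve_left (pow_ne_zero 2 hlam₀)]
  · rw [hlamA]; simp only [ha]; linarith
  · rw [hlamA]; simp only [ha]; linarith

lemma exists_kasner_of_isBlockKasnerWitness {d : ℕ} (hd : 5 ≤ d) {lam a b A : ℝ}
    (h : IsBlockKasnerWitness d lam a b A) :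
    ∃ (p : Fin d → ℝ) (A : ℝ), Monotone p ∧ (∑ i, p i) = 1 ∧ (∑ i, (p i) ^ 2) + A ^ 2 = 1 ∧
      2 * p ⟨0, by omega⟩ - lam * A > 0 ∧
      2 * (∑ i ∈ univ.filter fun i : Fin d => (i : ℕ) < d - 2, p i) + lam * A > 0 := by
  obtain ⟨hab, hsum, hsq, hel, hmag⟩ := h
  have huniv : (univ : Finset (Fin d)) = univ.filter fun i : Fin d => (i : ℕ) < d := by
    ext i; simp
  refine ⟨fun i => if (i : ℕ) < 3 then a else b, A, ?_, ?_, ?_, ?_, ?_⟩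
  · intro i j hij
    dsimp only
    split_ifs with hi hj hj
    exacts [le_rfl, hab, absurd (lt_of_le_of_lt (Fin.le_def.mp hij) hj) hi, le_rfl]
  · rwa [huniv, sum_filter_val_lt_ite le_rfl (by omega)]
  · simp only [apply_ite (· ^ 2)]
    rwa [huniv, sum_filter_val_lt_ite le_rfl (by omega)]
  · simpa using hel
  · rw [sum_filter_val_lt_ite (by omega) (by omega), Nat.cast_sub (by omega)]
    push_cast
    linarith

/-- For a 1-form in spacetime dimension `D = d + 1 ≥ 10` the critical dilaton
coupling is infinite: for every `λ` there are ordered generalized Kasner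
exponents satisfying the Kasner conditions and the strict electric and
magnetic wall inequalities. -/
theorem subcritical_one_form_high_dim (d : ℕ) (hd : 9 ≤ d) (lam : ℝ) :
    ∃ (p : Fin d → ℝ) (A : ℝ),
      Monotone p ∧
      (∑ i, p i) = 1 ∧
      (∑ i, (p i) ^ 2) + A ^ 2 = 1 ∧
      2 * p ⟨0, by omega⟩ - lam * A > 0 ∧
      2 * (∑ i ∈ Finset.univ.filter fun i : Fin d => (i : ℕ) < d - 2, p i)
        + lam * A > 0 := by
  have hd' : (9 : ℝ) ≤ d := by exact_mod_cast hd
  obtain ⟨a, b, A, h⟩ : ∃ a b A, IsBlockKasnerWitness d lam a b A :=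
    (le_total (lam ^ 2) 2).elim (exists_isBlockKasnerWitness_of_sq_le_two hd')
      (exists_isBlockKasnerWitness_of_two_le_sq hd')
  exact exists_kasner_of_isBlockKasnerWitness (by omega) h
end

section
/- Let λ > 0 be a real number. There exist real numbers p₁, p₂, p₃ and A satisfying the Kasner conditions p₁ + p₂ + p₃ = 1 and p₁² + p₂² + p₃² + A² = 1 together with the strict inequalities p₁ > 0, A > 0, p₁ + p₂ − (λ/2)A > 0, p₂ − p₁ > 0 and p₃ − p₂ > 0, if and only if λ < √(8/3). (The critical dilaton coupling for a 0-form in 4 spacetime dimensions is λ_c = √(8/3).) -/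
/-- The critical dilaton coupling for a 0-form (axionic scalar) in 4
spacetime dimensions is `λ_c = √(8/3)`. -/
theorem subcritical_zero_form_4d (lam : ℝ) (hlam : 0 < lam) :
    (∃ p₁ p₂ p₃ A : ℝ,
      p₁ + p₂ + p₃ = 1 ∧
      p₁ ^ 2 + p₂ ^ 2 + p₃ ^ 2 + A ^ 2 = 1 ∧
      p₁ > 0 ∧ A > 0 ∧ p₁ + p₂ - (lam / 2) * A > 0 ∧
      p₂ - p₁ > 0 ∧ p₃ - p₂ > 0) ↔
    lam < Real.sqrt (8 / 3) := by
  constructor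
  · rintro ⟨p₁, p₂, p₃, A, hsum, hsq, hp1, hA, hw, h21, h32⟩
    -- key: 3 (p₁+p₂)² < 2 A²
    have hp2 : 0 < p₂ := by linarith
    have hp3 : p₃ = 1 - p₁ - p₂ := by linarith
    subst hp3
    have key : 3 * (p₁ + p₂) ^ 2 < 2 * A ^ 2 := by
      nlinarith [mul_pos hp1 h32, mul_pos hp2 h32, mul_pos hp1 h21,
        sq_nonneg (p₂ - p₁)]
    have hlamA : lam * A < 2 * (p₁ + p₂) := by linarith
    have hsq' : lam ^ 2 * A ^ 2 < 4 * (p₁ + p₂) ^ 2 := by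
      nlinarith [mul_pos hlam hA]
    have hlam2 : lam ^ 2 < 8 / 3 := by
      have hA2 : 0 < A ^ 2 := by positivity
      nlinarith
    have := Real.lt_sqrt (le_of_lt hlam) (y := 8 / 3)
    exact this.mpr hlam2
  · intro h
    have h23 : (0:ℝ) ≤ 2 / 3 := by norm_num
    have hg : 0 < 2 / 3 - lam / 2 * Real.sqrt (2 / 3) := by
      have hs : Real.sqrt (8 / 3) * Real.sqrt (2 / 3) = 4 / 3 := by
        rw [← Real.sqrt_mul (by norm_num)]
        rw [show (8:ℝ) / 3 * (2 / 3) = (4 / 3) ^ 2 by norm_num,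
          Real.sqrt_sq (by norm_num)]
      have hsp : 0 < Real.sqrt (2 / 3) := Real.sqrt_pos.mpr (by norm_num)
      have : lam * Real.sqrt (2 / 3) < Real.sqrt (8 / 3) * Real.sqrt (2 / 3) :=
        mul_lt_mul_of_pos_right h hsp
      rw [hs] at this
      linarith
    set g := 2 / 3 - lam / 2 * Real.sqrt (2 / 3) with hgdef
    clear_value g
    set ε := min g 1 / 10 with hedef
    have hε : 0 < ε := by rw [hedef]; positivity
    have hε1 : ε ≤ 1 / 10 := by
      have : min g 1 ≤ 1 := min_le_right _ _
      rw [hedef]; linarith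
    have hε2 : 3 * ε < g := by
      have : min g 1 ≤ g := min_le_left _ _
      rw [hedef]; linarith
    have hA2 : (0:ℝ) < 2 / 3 - 14 * ε ^ 2 := by nlinarith
    refine ⟨1/3 - 2*ε, 1/3 - ε, 1/3 + 3*ε, Real.sqrt (2/3 - 14*ε^2),
      by ring, ?_, by linarith, Real.sqrt_pos.mpr hA2, ?_, by linarith, by linarith⟩
    · rw [Real.sq_sqrt hA2.le]; ring
    · have hle : Real.sqrt (2/3 - 14*ε^2) ≤ Real.sqrt (2/3) :=
        Real.sqrt_le_sqrt (by nlinarith)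
      have : lam / 2 * Real.sqrt (2/3 - 14*ε^2) ≤ lam / 2 * Real.sqrt (2/3) :=
        mul_le_mul_of_nonneg_left hle (by linarith)
      have hgle : lam / 2 * Real.sqrt (2/3) = 2/3 - g := by rw [hgdef]; ring
      linarith
end

section
/- Let d ≥ 3 be an integer and λ a real number. There exist real numbers p₁ ≤ p₂ ≤ ⋯ ≤ p_d and A satisfying p₁ + ⋯ + p_d = 1 and p₁² + ⋯ + p_d² + A² = 1 together with p₁ − (λ/2)A > 0 and p₁ + (λ/2)A > 0, if and only if |λ| < 2/√(d(d−1)). (The critical dilaton coupling for two 1-forms with opposite dilaton couplings ±λ in D = d + 1 spacetime dimensions is λ_c = 2/√(d(d−1)); in particular it is finite for every d, even though for a single 1-form λ_c = ∞ whenever d ≥ 9.) -/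
/-!
Shifting the exponents by their minimum `m = p₁` makes them nonnegative, and for nonnegative
numbers the sum of squares is at most the square of the sum; with the two Kasner conditions this
gives `d (d - 1) p₁² ≤ A²`. The two wall inequalities say `|λ A| / 2 < p₁`, so squaring yields
`λ² d (d - 1) < 4`. Conversely, the isotropic point `pᵢ = 1/d`, `A = √((d - 1)/d)`, where the bound
is attained, lies inside the chamber exactly when `λ² d (d - 1) < 4`.
-/

open Finset

theorem card_mul_card_sub_one_mul_sq_le_one_sub_sum_sq {ι : Type*} [Fintype ι] {p : ι → ℝ}
    {m : ℝ} (hm₀ : 0 ≤ m) (hm : ∀ i, m ≤ p i) (hsum : ∑ i, p i = 1) :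
    (Fintype.card ι : ℝ) * (Fintype.card ι - 1) * m ^ 2 ≤ 1 - ∑ i, p i ^ 2 := by
  set n : ℝ := (Fintype.card ι : ℝ)
  have hshift : ∑ i, (p i - m) = 1 - n * m := by
    simp [sum_sub_distrib, hsum, n]
  have hshift_sq : ∑ i, (p i - m) ^ 2 = ∑ i, p i ^ 2 - 2 * m + n * m ^ 2 := by
    simp [sub_sq, sum_add_distrib, sum_sub_distrib, ← sum_mul, ← mul_sum, hsum, n]
  have hnm : n * m ≤ 1 := by
    simpa [hsum, n] using sum_le_sum fun i (_ : i ∈ univ) => hm i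
  have hsq : ∑ i, (p i - m) ^ 2 ≤ (∑ i, (p i - m)) ^ 2 :=
    sum_sq_le_sq_sum_of_nonneg fun i _ => sub_nonneg.2 (hm i)
  have hn : 1 ≤ n := by
    have : (univ : Finset ι).Nonempty := nonempty_of_sum_ne_zero (by rw [hsum]; exact one_ne_zero)
    exact Nat.one_le_cast.2 (Fintype.card_pos_iff.2 (this.to_type))
  rw [hshift, hshift_sq] at hsq
  nlinarith [mul_nonneg (mul_nonneg (sub_nonneg.2 hn) hm₀) (sub_nonneg.2 hnm)]

theorem abs_lt_two_div_sqrt_iff {c : ℝ} (hc : 0 < c) (a : ℝ) :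
    |a| < 2 / √c ↔ a ^ 2 * c < 4 := by
  rw [lt_div_iff₀ (Real.sqrt_pos.2 hc), ← Real.sqrt_sq_eq_abs, ← Real.sqrt_mul (sq_nonneg a),
    Real.sqrt_lt' two_pos]
  norm_num

theorem sq_mul_lt_four_of_abs_half_mul_lt {c m a A : ℝ} (hc : 0 < c) (hwall : |a / 2 * A| < m)
    (hm : c * m ^ 2 ≤ A ^ 2) : a ^ 2 * c < 4 := by
  have hm₀ : 0 < m := (abs_nonneg _).trans_lt hwall
  have hA : 0 < A ^ 2 := (by positivity : 0 < c * m ^ 2).trans_le hm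
  have hsq : (a / 2 * A) ^ 2 < m ^ 2 := sq_lt_sq' (abs_lt.1 hwall).1 (abs_lt.1 hwall).2
  have : a ^ 2 * c * A ^ 2 < 4 * A ^ 2 := by nlinarith
  exact lt_of_mul_lt_mul_right this hA.le

theorem abs_half_mul_sqrt_lt_inv {x a : ℝ} (hx : 0 < x) (ha : a ^ 2 * (x * (x - 1)) < 4) :
    |a / 2 * √((x - 1) / x)| < 1 / x := by
  rw [← abs_of_pos (one_div_pos.2 hx), ← sq_lt_sq, mul_pow]
  rcases le_total 0 ((x - 1) / x) with h | h
  · rw [Real.sq_sqrt h, div_pow, div_pow, div_mul_div_comm, div_lt_div_iff₀ (by positivity) (by positivity)]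
    nlinarith
  · rw [Real.sqrt_eq_zero'.2 h, zero_pow two_ne_zero, mul_zero]; positivity

/-- The critical dilaton coupling for two 1-forms with opposite dilaton
couplings `±λ` in `D = d + 1` spacetime dimensions is `λ_c = 2/√(d(d−1))`. -/
theorem subcritical_two_one_forms_opposite (d : ℕ) (hd : 3 ≤ d) (lam : ℝ) :
    (∃ (p : Fin d → ℝ) (A : ℝ),
      Monotone p ∧
      (∑ i, p i) = 1 ∧
      (∑ i, (p i) ^ 2) + A ^ 2 = 1 ∧
      p ⟨0, by omega⟩ - (lam / 2) * A > 0 ∧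
      p ⟨0, by omega⟩ + (lam / 2) * A > 0) ↔
    |lam| < 2 / Real.sqrt (d * (d - 1)) := by
  have hd' : (3 : ℝ) ≤ d := by exact_mod_cast hd
  rw [abs_lt_two_div_sqrt_iff (by nlinarith)]
  constructor
  · rintro ⟨p, A, hmono, hsum, hnorm, hminus, hplus⟩
    have hwall : |lam / 2 * A| < p ⟨0, by omega⟩ := abs_lt.2 ⟨by linarith, by linarith⟩
    have hbound := card_mul_card_sub_one_mul_sq_le_one_sub_sum_sq
      ((abs_nonneg _).trans hwall.le) (fun i => hmono (Nat.zero_le i.val)) hsum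
    rw [Fintype.card_fin] at hbound
    exact sq_mul_lt_four_of_abs_half_mul_lt (by nlinarith) hwall (by linarith)
  · intro hlam
    have hwall := abs_half_mul_sqrt_lt_inv (by positivity) hlam
    refine ⟨fun _ => 1 / d, √((d - 1) / d), monotone_const, ?_, ?_,
      by linarith [(abs_lt.1 hwall).2], by linarith [(abs_lt.1 hwall).1]⟩
    · simp [field]
    · rw [Real.sq_sqrt (div_nonneg (by linarith) (by positivity))]; simp [field]
end

section
/- Let d ≥ 3 be an integer, n an integer with 1 ≤ n ≤ d − 2, and let p₁ ≤ p₂ ≤ ⋯ ≤ p_d, λ, A be real numbers. If p₁ + ⋯ + p_n − (λ/2)A ≥ 0 and p₁ + ⋯ + p_{d−n−1} + (λ/2)A ≥ 0, then 2p₁ + p₂ + ⋯ + p_{d−2} ≥ 0. (The gravitational wall inequalities are consequences of the ordering inequalities and the electric and magnetic wall inequalities of an n-form.) -/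
/-!
Adding the electric and magnetic wall inequalities eliminates the dilaton term and leaves
`(p₁ + ⋯ + p_n) + (p₁ + ⋯ + p_m) ≥ 0` with `m = d - n - 1 ≥ 1`. Since `m + (n - 1) = d - 2`,
the gravitational wall form `p₁ + (p₁ + ⋯ + p_{d-2})` is obtained from this sum by replacing
`p₂, …, p_n` with `p_{m+1}, …, p_{m+n-1}`, which are no smaller because the exponents are ordered.
-/

open Finset

section
variable {M : Type*} [AddCommMonoid M]

theorem Fin.sum_filter_val_eq_sum_range_filter_clamp {m : ℕ} (p : Fin (m + 1) → M)
    (P : ℕ → Prop) [DecidablePred P] :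
    ∑ i ∈ univ.filter (fun i : Fin (m + 1) => P i), p i
      = ∑ i ∈ (range (m + 1)).filter P, p (Fin.clamp i m) := by
  rw [sum_filter, sum_filter, ← Fin.sum_univ_eq_sum_range]
  refine sum_congr rfl fun i _ => ?_
  rw [show Fin.clamp i m = i from Fin.ext (by simp [Fin.clamp]; omega)]

theorem Finset.sum_range_succ_add_sum_range_le_of_monotone
    [PartialOrder M] [IsOrderedAddMonoid M] {q : ℕ → M} (hq : Monotone q) {m : ℕ} (hm : 1 ≤ m)
    (k : ℕ) :
    ∑ i ∈ range (k + 1), q i + ∑ i ∈ range m, q i ≤ q 0 + ∑ i ∈ range (m + k), q i := by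
  have hshift : ∑ i ∈ range k, q (i + 1) ≤ ∑ i ∈ range k, q (m + i) :=
    sum_le_sum fun i _ => hq (by omega)
  rw [sum_range_succ', sum_range_add]
  calc ∑ i ∈ range k, q (i + 1) + q 0 + ∑ i ∈ range m, q i
      = q 0 + (∑ i ∈ range m, q i + ∑ i ∈ range k, q (i + 1)) := by abel
    _ ≤ q 0 + (∑ i ∈ range m, q i + ∑ i ∈ range k, q (m + i)) := by gcongr

end

theorem Finset.range_filter_lt {n k : ℕ} (hk : k ≤ n) : (range n).filter (· < k) = range k := by
  ext i
  simp only [mem_filter, mem_range]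
  omega

/-- The dominant gravitational wall inequality `2p₁ + p₂ + ⋯ + p_{d−2} ≥ 0`
is a consequence of the ordering of the Kasner exponents together with the
electric and magnetic wall inequalities of an `n`-form. -/
theorem gravitational_wall_from_form_walls (d n : ℕ)
    (hn₁ : 1 ≤ n) (hn₂ : n ≤ d - 2)
    (p : Fin d → ℝ) (lam A : ℝ) (hmono : Monotone p)
    (helec : (∑ i ∈ Finset.univ.filter fun i : Fin d => (i : ℕ) < n, p i)
        - (lam / 2) * A ≥ 0)
    (hmagn : (∑ i ∈ Finset.univ.filter fun i : Fin d => (i : ℕ) < d - n - 1, p i)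
        + (lam / 2) * A ≥ 0) :
    2 * p ⟨0, by omega⟩
      + (∑ i ∈ Finset.univ.filter
          fun i : Fin d => 1 ≤ (i : ℕ) ∧ (i : ℕ) < d - 2, p i) ≥ 0 := by
  obtain ⟨e, rfl⟩ : ∃ e, d = e + 1 := ⟨d - 1, by omega⟩
  have hmiddle : (range (e + 1)).filter (fun i => 1 ≤ i ∧ i < e + 1 - 2) = Ico 1 (e - 1) := by
    ext i
    simp only [mem_filter, mem_range, mem_Ico]
    omega
  rw [Fin.sum_filter_val_eq_sum_range_filter_clamp p (· < n),
    range_filter_lt (by omega)] at helec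
  rw [Fin.sum_filter_val_eq_sum_range_filter_clamp p (· < e + 1 - n - 1),
    range_filter_lt (by omega), show e + 1 - n - 1 = e - n by omega] at hmagn
  rw [Fin.sum_filter_val_eq_sum_range_filter_clamp p (fun i => 1 ≤ i ∧ i < e + 1 - 2),
    hmiddle, show p ⟨0, _⟩ = p (Fin.clamp 0 e) from rfl]
  have hwalls := sum_range_succ_add_sum_range_le_of_monotone (q := fun i => p (Fin.clamp i e))
    (hmono.comp Fin.clamp_monotone) (m := e - n) (by omega) (n - 1)
  rw [Nat.sub_add_cancel hn₁, show e - n + (n - 1) = e - 1 by omega,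
    sum_range_eq_add_Ico _ (n := e - 1) (by omega)] at hwalls
  linarith
end

section
/- Let d ≥ 1 and n ≥ 1 be integers, let q₁ ≤ q₂ ≤ ⋯ ≤ q_d be real numbers, and let a₀, a₁, …, a_n be indices in {1, …, d}. Then for all k, j ∈ {0, …, n}: q_{a₀} + Σ_{i=1}^{n} |q_{a_{i−1}} − q_{a_i}| + q_{a_n} ≥ 2 q_{max(a_k, a_j)}. -/
lemma tele_abs (f : ℕ → ℝ) : ∀ s t : ℕ, s ≤ t →
    |f s - f t| ≤ ∑ i ∈ Finset.Ico s t, |f i - f (i + 1)| := by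
  intro s t hst
  induction t, hst using Nat.le_induction with
  | base => simp
  | succ t hst ih =>
    rw [Finset.sum_Ico_succ_top hst]
    calc |f s - f (t+1)| ≤ |f s - f t| + |f t - f (t+1)| := by
          have := abs_sub_le (f s) (f t) (f (t+1)); linarith
      _ ≤ _ := by linarith

/-- For ordered exponents `q₁ ≤ ⋯ ≤ q_d` and any path of indices
`a₀, …, a_n` and any `k, j ∈ {0, …, n}`:
`q_{a₀} + ∑_{i=1}^n |q_{a_{i−1}} − q_{a_i}| + q_{a_n} ≥ 2 q_{max(a_k, a_j)}`. -/
theorem path_inequality_two (d n : ℕ) (hd : 1 ≤ d) (hn : 1 ≤ n)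
    (q : Fin d → ℝ) (hq : Monotone q) (a : ℕ → Fin d)
    (k j : ℕ) (hk : k ≤ n) (hj : j ≤ n) :
    q (a 0) + (∑ i ∈ Finset.range n, |q (a i) - q (a (i + 1))|) + q (a n)
      ≥ 2 * q (max (a k) (a j)) := by
  obtain ⟨m, hm, ham⟩ : ∃ m, m ≤ n ∧ a m = max (a k) (a j) := by
    rcases max_choice (a k) (a j) with h | h
    · exact ⟨k, hk, h.symm⟩
    · exact ⟨j, hj, h.symm⟩
  set f : ℕ → ℝ := fun i => q (a i) with hf
  have hsplit : (∑ i ∈ Finset.range n, |f i - f (i + 1)|)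
      = (∑ i ∈ Finset.Ico 0 m, |f i - f (i + 1)|)
        + ∑ i ∈ Finset.Ico m n, |f i - f (i + 1)| := by
    rw [Finset.sum_Ico_consecutive _ (Nat.zero_le m) hm, Finset.range_eq_Ico]
  have h1 : |f 0 - f m| ≤ ∑ i ∈ Finset.Ico 0 m, |f i - f (i + 1)| :=
    tele_abs f 0 m (Nat.zero_le m)
  have h2 : |f m - f n| ≤ ∑ i ∈ Finset.Ico m n, |f i - f (i + 1)| :=
    tele_abs f m n hm
  have h3 : f m - f 0 ≤ |f 0 - f m| := by rw [abs_sub_comm]; exact le_abs_self _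
  have h4 : f m - f n ≤ |f m - f n| := le_abs_self _
  have : q (max (a k) (a j)) = f m := by rw [hf]; simp [ham]
  rw [this]
  change f 0 + (∑ i ∈ Finset.range n, |f i - f (i + 1)|) + f n ≥ 2 * f m
  rw [hsplit]; linarith
end

section
/- Let d ≥ 1 and n ≥ 1 be integers, let q₁ ≤ q₂ ≤ ⋯ ≤ q_d be real numbers, and let a₀, a₁, …, a_n be indices in {1, …, d}. Then for all k, j ∈ {0, …, n}: −q_{a₀} + Σ_{i=1}^{n} |q_{a_{i−1}} − q_{a_i}| − q_{a_n} ≥ −2 q_{min(a_k, a_j)}. -/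
lemma path_tri (d : ℕ) (q : Fin d → ℝ) (a : ℕ → Fin d) :
    ∀ s t : ℕ, s ≤ t →
      |q (a s) - q (a t)| ≤ ∑ i ∈ Finset.Ico s t, |q (a i) - q (a (i + 1))| := by
  intro s t hst
  induction t with
  | zero => simp [Nat.le_zero.mp hst]
  | succ t ih =>
    rcases Nat.lt_or_ge s (t+1) with h | h
    · have hs : s ≤ t := Nat.lt_succ_iff.mp h
      rw [Finset.sum_Ico_succ_top hs]
      calc |q (a s) - q (a (t+1))|
          ≤ |q (a s) - q (a t)| + |q (a t) - q (a (t+1))| := abs_sub_le _ _ _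
        _ ≤ _ := by linarith [ih hs]
    · have : s = t + 1 := le_antisymm hst h
      simp [this]

lemma path_mid (d n : ℕ) (q : Fin d → ℝ) (a : ℕ → Fin d)
    (m : ℕ) (hm : m ≤ n) :
    -q (a 0) + (∑ i ∈ Finset.range n, |q (a i) - q (a (i + 1))|) - q (a n)
      ≥ -(2 * q (a m)) := by
  have h1 := path_tri d q a 0 m (Nat.zero_le m)
  have h2 := path_tri d q a m n hm
  have hsplit : ∑ i ∈ Finset.range n, |q (a i) - q (a (i + 1))|
      = (∑ i ∈ Finset.Ico 0 m, |q (a i) - q (a (i + 1))|)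
        + ∑ i ∈ Finset.Ico m n, |q (a i) - q (a (i + 1))| := by
    rw [Finset.range_eq_Ico, ← Finset.sum_Ico_consecutive _ (Nat.zero_le m) hm]
  have ha1 : q (a 0) - q (a m) ≤ |q (a 0) - q (a m)| := le_abs_self _
  have ha2 : q (a n) - q (a m) ≤ |q (a m) - q (a n)| := by
    rw [abs_sub_comm]; exact le_abs_self _
  linarith

/-- For ordered exponents `q₁ ≤ ⋯ ≤ q_d` and any path of indices
`a₀, …, a_n` and any `k, j ∈ {0, …, n}`:
`−q_{a₀} + ∑_{i=1}^n |q_{a_{i−1}} − q_{a_i}| − q_{a_n} ≥ −2 q_{min(a_k, a_j)}`. -/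
theorem path_inequality_three (d n : ℕ) (hd : 1 ≤ d) (hn : 1 ≤ n)
    (q : Fin d → ℝ) (hq : Monotone q) (a : ℕ → Fin d)
    (k j : ℕ) (hk : k ≤ n) (hj : j ≤ n) :
    -q (a 0) + (∑ i ∈ Finset.range n, |q (a i) - q (a (i + 1))|) - q (a n)
      ≥ -(2 * q (min (a k) (a j))) := by
  rcases min_cases (a k) (a j) with ⟨hmin, _⟩ | ⟨hmin, _⟩
  · rw [hmin]; exact path_mid d n q a k hk
  · rw [hmin]; exact path_mid d n q a j hj
end
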